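/- For any α_1, ..., α_{n-1} ∈ k, the element D = ∂ + Σ_{i=1}^{n-1} α_i ∂^{p^i} of W(1;n)_p satisfies D^{p^{n-1}} = ∂^{p^{n-1}} and D^{p^n} = 0 (powers in the restricted Lie algebra / associative algebra End(O(1;n)), with ∂^{p^n} = 0). -/
import Mathlib


/-- The divided power algebra `O(1;n)` modelled as `Fin q → k` (coordinates in the
basis `x^(0), …, x^(q-1)`), with product `x^(a) x^(b) = C(a+b,a) x^(a+b)` (truncated). -/
def omul {k : Type*} [Field k] {q : ℕ} (f g : Fin q → k) : Fin q → k :=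
  fun c => ∑ a : Fin q, ∑ b : Fin q,
    if (a : ℕ) + (b : ℕ) = (c : ℕ) then ((c : ℕ).choose (a : ℕ) : k) * f a * g b else 0

/-- The basis vector `x^(a)` of `O(1;n)` (zero if `a ≥ q`). -/
def eBasis (k : Type*) [Field k] (q a : ℕ) : Fin q → k :=
  fun c => if (c : ℕ) = a then 1 else 0

/-- The special derivation `x^(i)∂` of `O(1;n)`, as an endomorphism of `Fin q → k`:
it sends `x^(a) ↦ x^(a-1) x^(i) = C(a-1+i, i) x^(a-1+i)`. In particular `wOp k q 0 = ∂`. -/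
def wOp (k : Type*) [Field k] (q i : ℕ) : Module.End k (Fin q → k) where
  toFun f := fun c =>
    if h : i ≤ (c : ℕ) ∧ (c : ℕ) - i + 1 < q then
      ((c : ℕ).choose i : k) * f ⟨(c : ℕ) - i + 1, h.2⟩
    else 0
  map_add' f g := by
    funext c
    simp only [Pi.add_apply]
    split_ifs <;> simp [mul_add]
  map_smul' r f := by
    funext c
    simp only [Pi.smul_apply, smul_eq_mul, RingHom.id_apply]
    split_ifs <;> ring

lemma wOp_zero_apply {k : Type*} [Field k] {q : ℕ} (f : Fin q → k) (c : Fin q) :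
    wOp k q 0 f c = if h : (c : ℕ) + 1 < q then f ⟨(c : ℕ) + 1, h⟩ else 0 := by
  simp [wOp]

lemma wOp_zero_pow_apply {k : Type*} [Field k] {q : ℕ} (m : ℕ) (f : Fin q → k) (c : Fin q) :
    ((wOp k q 0) ^ m) f c = if h : (c : ℕ) + m < q then f ⟨(c : ℕ) + m, h⟩ else 0 := by
  induction m generalizing f c with
  | zero => simp
  | succ m ih =>
    rw [pow_succ, Module.End.mul_apply, ih]
    split_ifs with h1 h2 h2
    · rw [wOp_zero_apply, dif_pos (by simp; omega)]
      congr 1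
    · rw [wOp_zero_apply, dif_neg (by simp; omega)]
    · exfalso; omega
    · rfl

lemma wOp_zero_pow_eq_zero {k : Type*} [Field k] {q : ℕ} {m : ℕ} (h : q ≤ m) :
    (wOp k q 0) ^ m = 0 := by
  apply LinearMap.ext; intro f; funext c
  rw [wOp_zero_pow_apply, dif_neg (by omega)]; rfl

open Polynomial in
lemma key_pow {k : Type*} [Field k] (p : ℕ) [Fact p.Prime] [CharP k p]
    (q : ℕ) (S : Finset ℕ) (α : ℕ → k) (m : ℕ) :
    (wOp k q 0 + ∑ i ∈ S, α i • (wOp k q 0) ^ (p ^ i)) ^ (p ^ m)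
      = (wOp k q 0) ^ (p ^ m) + ∑ i ∈ S, (α i) ^ (p ^ m) • (wOp k q 0) ^ (p ^ i * p ^ m) := by
  set δ := wOp k q 0 with hδ
  have h1 : (δ + ∑ i ∈ S, α i • δ ^ (p ^ i))
      = aeval δ (X + ∑ i ∈ S, C (α i) * X ^ (p ^ i)) := by
    simp [Algebra.smul_def]
  have hP : (X + ∑ i ∈ S, C (α i) * X ^ (p ^ i)) ^ (p ^ m)
      = X ^ (p ^ m) + ∑ i ∈ S, C ((α i) ^ (p ^ m)) * X ^ (p ^ i * p ^ m) := by
    rw [add_pow_char_pow, sum_pow_char_pow]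
    congr 1
    refine Finset.sum_congr rfl fun i _ => ?_
    rw [mul_pow, ← C_pow, ← pow_mul]
  rw [h1, ← map_pow, hP]
  simp [Algebra.smul_def]

/-- `D = ∂ + Σ_{i=1}^{n-1} α_i ∂^{p^i}` satisfies
`D^{p^{n-1}} = ∂^{p^{n-1}}` and `D^{p^n} = 0` in `End(O(1;n))`. -/
theorem power_of_regular_element
    (k : Type*) [Field k] (p n : ℕ) [Fact p.Prime] [CharP k p]
    (hp : 3 < p) (hn : 2 ≤ n) (α : ℕ → k) :
    (wOp k (p ^ n) 0 + ∑ i ∈ Finset.Icc 1 (n - 1), α i • (wOp k (p ^ n) 0) ^ (p ^ i))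
        ^ (p ^ (n - 1)) = (wOp k (p ^ n) 0) ^ (p ^ (n - 1)) ∧
    (wOp k (p ^ n) 0 + ∑ i ∈ Finset.Icc 1 (n - 1), α i • (wOp k (p ^ n) 0) ^ (p ^ i))
        ^ (p ^ n) = 0 := by
  have hp1 : 1 ≤ p := by omega
  have hzero : ∀ m : ℕ, n - 1 ≤ m →
      (∑ i ∈ Finset.Icc 1 (n - 1), (α i) ^ (p ^ m) • (wOp k (p ^ n) 0) ^ (p ^ i * p ^ m)) = 0 ∧
      True := fun m hm => ⟨Finset.sum_eq_zero fun i hi => by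
    simp only [Finset.mem_Icc] at hi
    rw [← pow_add, wOp_zero_pow_eq_zero (Nat.pow_le_pow_right hp1 (by omega)), smul_zero], trivial⟩
  refine ⟨?_, ?_⟩
  · rw [key_pow, (hzero (n-1) le_rfl).1, add_zero]
  · rw [key_pow, (hzero n (by omega)).1, add_zero, wOp_zero_pow_eq_zero le_rfl]
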